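/- Under the discretized (Galerkin) piezoelectric setting: for every T > 0 there exists a constant C* > 0, depending only on n, k, M, K, A, C, α, β and T, such that for every continuously differentiable f : ℝ → ℝⁿ, every twice continuously differentiable g : ℝ → ℝᵏ, and every solution (u, φ) of the discretized piezoelectric system on [0, T] with u three times continuously differentiable and φ twice continuously differentiable, one has for all t ∈ [0, T]: ‖u''(t)‖² + ‖u'(t)‖² + ‖φ'(t)‖² ≤ C* · ( ‖u''(0)‖² + ‖u'(0)‖² + ‖g'(0)‖² + ∫₀ᵀ ( ‖f'(s)‖² + ‖g'(s)‖² + ‖g''(s)‖² ) ds ). -/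

import Mathlib

/-!
Differentiating the system in time shows that `(u', φ')` solves it again, with forcing `(f', g')`.
For a solution `(v, ψ)` with forcing `(F, G)` consider the energy
`E = ⟨v', M v'⟩ + ⟨v, K v⟩ + ⟨ψ, A ψ⟩ + ‖v‖²`. Testing the motion equation with `v'`, the coupling
term `⟨v', C ψ⟩` equals `⟨ψ', A ψ⟩ + ⟨ψ, G'⟩` by the differentiated constraint, so it cancels the
electric part of `E'`; the damping terms have a sign, and Young's inequality together with the
coercivity `l (‖v'‖² + ‖v‖² + ‖ψ‖²) ≤ E` gives `E' ≤ (2 / l) E + ‖F‖² + ‖G'‖²`. Grönwall's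
inequality then bounds `E(t)`, and `E(0)` is controlled by `‖u''(0)‖², ‖u'(0)‖², ‖g'(0)‖²` because
the constraint at `t = 0` determines `A φ'(0) = Cᵀ u'(0) - g'(0)`.
-/

open MeasureTheory Matrix Set Filter

/-- The pair `(u, φ)` (with first and second derivatives `u'`, `u''` of `u`) solves the
discretized (Galerkin) piezoelectric system with mass matrix `M`, stiffness matrix `K`,
dielectric matrix `A`, piezoelectric coupling matrix `C`, Rayleigh damping parameters
`α, β` and forcing terms `f, g` on the time set `I`. -/
def PiezoSolves {n k : ℕ} (M K : Matrix (Fin n) (Fin n) ℝ)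
    (A : Matrix (Fin k) (Fin k) ℝ) (C : Matrix (Fin n) (Fin k) ℝ)
    (α β : ℝ) (f : ℝ → Fin n → ℝ) (g : ℝ → Fin k → ℝ)
    (u u' u'' : ℝ → Fin n → ℝ) (φ : ℝ → Fin k → ℝ) (I : Set ℝ) : Prop :=
  (∀ t ∈ I, HasDerivAt u (u' t) t) ∧
  (∀ t ∈ I, HasDerivAt u' (u'' t) t) ∧
  (∀ t ∈ I,
    M.mulVec (u'' t) + α • M.mulVec (u' t) + K.mulVec (u t)
      + β • K.mulVec (u' t) + C.mulVec (φ t) = f t) ∧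
  (∀ t ∈ I, Cᵀ.mulVec (u t) - A.mulVec (φ t) = g t)

section DotProduct

variable {ι : Type*} [Fintype ι]

theorem dotProduct_self_nonneg (v : ι → ℝ) : 0 ≤ v ⬝ᵥ v := by
  simpa using dotProduct_star_self_nonneg v

theorem two_mul_dotProduct_le (v w : ι → ℝ) : 2 * (v ⬝ᵥ w) ≤ v ⬝ᵥ v + w ⬝ᵥ w := by
  have := dotProduct_self_nonneg (v - w)
  simp only [sub_dotProduct, dotProduct_sub, dotProduct_comm w v] at this
  linarith

theorem sub_dotProduct_self_le (v w : ι → ℝ) :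
    (v - w) ⬝ᵥ (v - w) ≤ 2 * (v ⬝ᵥ v) + 2 * (w ⬝ᵥ w) := by
  have := dotProduct_self_nonneg (v + w)
  simp only [sub_dotProduct, dotProduct_sub, add_dotProduct, dotProduct_add,
    dotProduct_comm w v] at this ⊢
  linarith

theorem mul_dotProduct_le_of_mul_dotProduct_self_le {l : ℝ} {v w : ι → ℝ} (hl : 0 < l)
    (h : l * (v ⬝ᵥ v) ≤ v ⬝ᵥ w) : l * (v ⬝ᵥ w) ≤ w ⬝ᵥ w := by
  have := two_mul_dotProduct_le (l • v) w
  simp only [smul_dotProduct, dotProduct_smul, smul_eq_mul] at this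
  nlinarith

theorem sq_le_dotProduct_self (v : ι → ℝ) (i : ι) : v i ^ 2 ≤ v ⬝ᵥ v := by
  simpa [dotProduct, sq] using
    Finset.single_le_sum (fun j _ => mul_self_nonneg (v j)) (Finset.mem_univ i)

theorem isCompact_setOf_dotProduct_self_eq_one : IsCompact {v : ι → ℝ | v ⬝ᵥ v = 1} := by
  refine Metric.isCompact_of_isClosed_isBounded
    (isClosed_eq (continuous_id.dotProduct continuous_id) continuous_const) ?_
  refine (Metric.isBounded_closedBall (x := 0) (r := 1)).subset fun v hv => ?_
  rw [mem_closedBall_zero_iff, pi_norm_le_iff_of_nonneg zero_le_one]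
  intro i
  rw [Real.norm_eq_abs, ← sq_le_one_iff_abs_le_one]
  exact (sq_le_dotProduct_self v i).trans_eq hv

end DotProduct

namespace Matrix

theorem PosSemidef.isSymm {ι : Type*} {S : Matrix ι ι ℝ} (hS : S.PosSemidef) : S.IsSymm :=
  isHermitian_iff_isSymm.1 hS.isHermitian

variable {ι κ : Type*} [Fintype ι] [Fintype κ]

theorem PosSemidef.dotProduct_mulVec_self_nonneg {S : Matrix ι ι ℝ} (hS : S.PosSemidef)
    (v : ι → ℝ) : 0 ≤ v ⬝ᵥ S *ᵥ v := by
  simpa using hS.dotProduct_mulVec_nonneg v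

theorem IsSymm.dotProduct_mulVec_comm {S : Matrix ι ι ℝ} (hS : S.IsSymm) (v w : ι → ℝ) :
    v ⬝ᵥ S *ᵥ w = w ⬝ᵥ S *ᵥ v := by
  rw [dotProduct_mulVec, ← mulVec_transpose, hS.eq, dotProduct_comm]

theorem transpose_mulVec_dotProduct (C : Matrix ι κ ℝ) (v : ι → ℝ) (w : κ → ℝ) :
    Cᵀ *ᵥ v ⬝ᵥ w = v ⬝ᵥ C *ᵥ w := by
  rw [mulVec_transpose, dotProduct_mulVec]

theorem exists_unit_dotProduct_mulVec_eq (S : Matrix ι ι ℝ) {v : ι → ℝ} (hv : v ≠ 0) :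
    ∃ w : ι → ℝ, w ⬝ᵥ w = 1 ∧ v ⬝ᵥ S *ᵥ v = (v ⬝ᵥ v) * (w ⬝ᵥ S *ᵥ w) := by
  have hpos : 0 < v ⬝ᵥ v := (dotProduct_self_nonneg v).lt_of_ne' (by simpa using hv)
  set r := √(v ⬝ᵥ v)
  have hr : r ^ 2 = v ⬝ᵥ v := Real.sq_sqrt hpos.le
  have hr₀ : r ≠ 0 := (Real.sqrt_pos.2 hpos).ne'
  refine ⟨r⁻¹ • v, ?_, ?_⟩
  · simp only [smul_dotProduct, dotProduct_smul, smul_eq_mul, ← hr]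
    field_simp
  · simp only [smul_dotProduct, dotProduct_smul, mulVec_smul, smul_eq_mul, ← hr]
    field_simp

theorem exists_dotProduct_mulVec_le (S : Matrix ι ι ℝ) :
    ∃ c ≥ 0, ∀ v : ι → ℝ, v ⬝ᵥ S *ᵥ v ≤ c * (v ⬝ᵥ v) := by
  obtain ⟨c, hc⟩ := isCompact_setOf_dotProduct_self_eq_one.bddAbove_image
    (f := fun w : ι → ℝ => w ⬝ᵥ S *ᵥ w)
    (continuous_id.dotProduct (continuous_const.matrix_mulVec continuous_id)).continuousOn
  refine ⟨max c 0, le_max_right _ _, fun v => ?_⟩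
  rcases eq_or_ne v 0 with rfl | hv
  · simp
  obtain ⟨w, hw, hvw⟩ := S.exists_unit_dotProduct_mulVec_eq hv
  rw [hvw, mul_comm]
  exact mul_le_mul_of_nonneg_right ((hc ⟨w, hw, rfl⟩).trans (le_max_left _ _))
    (dotProduct_self_nonneg v)

theorem PosDef.exists_mul_dotProduct_self_le {S : Matrix ι ι ℝ} (hS : S.PosDef) :
    ∃ c > 0, ∀ v : ι → ℝ, c * (v ⬝ᵥ v) ≤ v ⬝ᵥ S *ᵥ v := by
  obtain ⟨c, hc, hcS⟩ := isCompact_setOf_dotProduct_self_eq_one.exists_forall_le'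
    (f := fun w : ι → ℝ => w ⬝ᵥ S *ᵥ w)
    (continuous_id.dotProduct (continuous_const.matrix_mulVec continuous_id)).continuousOn
    (a := 0) fun w hw => hS.dotProduct_mulVec_pos (by rintro rfl; simp at hw)
  refine ⟨c, hc, fun v => ?_⟩
  rcases eq_or_ne v 0 with rfl | hv
  · simp
  obtain ⟨w, hw, hvw⟩ := S.exists_unit_dotProduct_mulVec_eq hv
  rw [hvw, mul_comm]
  exact mul_le_mul_of_nonneg_left (hcS w hw) (dotProduct_self_nonneg v)

end Matrix

section Deriv

variable {ι κ : Type*} [Fintype ι] [Fintype κ]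

theorem HasDerivAt.matrix_mulVec (S : Matrix κ ι ℝ) {v : ℝ → ι → ℝ} {v' : ι → ℝ} {t : ℝ}
    (hv : HasDerivAt v v' t) : HasDerivAt (fun s => S *ᵥ v s) (S *ᵥ v') t :=
  (LinearMap.toContinuousLinearMap S.mulVecLin).hasFDerivAt.comp_hasDerivAt t hv

theorem HasDerivAt.dotProduct {v w : ℝ → ι → ℝ} {v' w' : ι → ℝ} {t : ℝ}
    (hv : HasDerivAt v v' t) (hw : HasDerivAt w w' t) :
    HasDerivAt (fun s => v s ⬝ᵥ w s) (v' ⬝ᵥ w t + v t ⬝ᵥ w') t := by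
  simp only [_root_.dotProduct]
  rw [← Finset.sum_add_distrib]
  exact HasDerivAt.fun_sum fun i _ => (hasDerivAt_pi.1 hv i).mul (hasDerivAt_pi.1 hw i)

theorem HasDerivAt.dotProduct_mulVec_self {S : Matrix ι ι ℝ} (hS : S.IsSymm)
    {v : ℝ → ι → ℝ} {v' : ι → ℝ} {t : ℝ} (hv : HasDerivAt v v' t) :
    HasDerivAt (fun s => v s ⬝ᵥ S *ᵥ v s) (2 * (v' ⬝ᵥ S *ᵥ v t)) t := by
  convert hv.dotProduct (hv.matrix_mulVec S) using 1
  rw [hS.dotProduct_mulVec_comm v', two_mul]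

theorem HasDerivAt.eq_of_eqOn_Icc {E : Type*} [NormedAddCommGroup E] [NormedSpace ℝ E]
    {F G : ℝ → E} {F' G' : E} {a b t : ℝ} (hab : a < b) (ht : t ∈ Icc a b)
    (hFG : EqOn F G (Icc a b)) (hF : HasDerivAt F F' t) (hG : HasDerivAt G G' t) : F' = G' :=
  (uniqueDiffOn_Icc hab t ht).eq_deriv _ hF.hasDerivWithinAt
    (hG.hasDerivWithinAt.congr hFG (hFG ht))

end Deriv

theorem gronwallBound_of_ε_eq_mul (δ K I x : ℝ) :
    gronwallBound δ K (K * I) x = (δ + I) * Real.exp (K * x) - I := by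
  rcases eq_or_ne K 0 with rfl | hK
  · simp [gronwallBound_K0]
  · rw [gronwallBound_of_K_ne_0 hK]
    field_simp
    ring

theorem le_exp_mul_add_integral_of_deriv_right_le {E E' H : ℝ → ℝ} {κ a b : ℝ} (hκ : 0 ≤ κ)
    (hE : ContinuousOn E (Icc a b)) (hE' : ∀ t ∈ Ico a b, HasDerivWithinAt E (E' t) (Ici t) t)
    (hH : Continuous H) (hH₀ : ∀ t, 0 ≤ H t) (bound : ∀ t ∈ Ico a b, E' t ≤ κ * E t + H t) :
    ∀ t ∈ Icc a b, E t ≤ Real.exp (κ * (t - a)) * (E a + ∫ s in a..t, H s) := by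
  intro t ht
  have hprim (s : ℝ) : HasDerivAt (fun s => ∫ r in a..s, H r) (H s) s :=
    (hH.integral_hasStrictDerivAt a s).hasDerivAt
  have hmono : ∀ s ∈ Icc a t, ∫ r in a..s, H r ≤ ∫ r in a..t, H r := fun s hs =>
    intervalIntegral.integral_mono_interval le_rfl hs.1 hs.2 (.of_forall hH₀)
      (hH.intervalIntegrable _ _)
  -- On `[a, t]`, `E - ∫ₐ H` obeys Grönwall's inequality with the constant forcing `κ ∫ₐᵗ H`.
  have key := le_gronwallBound_of_liminf_deriv_right_le
    (f := fun s => E s - ∫ r in a..s, H r) (f' := fun s => E' s - H s)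
    (δ := E a) (K := κ) (ε := κ * ∫ r in a..t, H r) (b := t)
    ((hE.mono (Icc_subset_Icc_right ht.2)).sub fun s _ =>
      (hprim s).continuousAt.continuousWithinAt)
    (fun s hs r hr => ((hE' s ⟨hs.1, hs.2.trans_le ht.2⟩).sub
      (hprim s).hasDerivWithinAt).liminf_right_slope_le hr)
    (by simp)
    (fun s hs => by
      have := bound s ⟨hs.1, hs.2.trans_le ht.2⟩
      have := mul_le_mul_of_nonneg_left (hmono s (Ico_subset_Icc_self hs)) hκ
      linarith)
    t (right_mem_Icc.2 ht.1)
  rw [gronwallBound_of_ε_eq_mul] at key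
  linarith

section Energy

variable {ι κ : Type*} [Fintype ι] [Fintype κ]

/-- The extra `v ⬝ᵥ v` makes the energy coercive although `K` is only semidefinite. -/
def piezoEnergy (M K : Matrix ι ι ℝ) (A : Matrix κ κ ℝ) (v v' : ι → ℝ) (ψ : κ → ℝ) : ℝ :=
  v' ⬝ᵥ M *ᵥ v' + v ⬝ᵥ K *ᵥ v + ψ ⬝ᵥ A *ᵥ ψ + v ⬝ᵥ v

theorem exists_mul_le_piezoEnergy {M K : Matrix ι ι ℝ} {A : Matrix κ κ ℝ} (hM : M.PosDef)
    (hK : K.PosSemidef) (hA : A.PosDef) :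
    ∃ l > 0, ∀ v v' ψ, l * (v' ⬝ᵥ v' + v ⬝ᵥ v + ψ ⬝ᵥ ψ) ≤ piezoEnergy M K A v v' ψ := by
  obtain ⟨lM, hlM, hMl⟩ := hM.exists_mul_dotProduct_self_le
  obtain ⟨lA, hlA, hAl⟩ := hA.exists_mul_dotProduct_self_le
  obtain ⟨l, hl, hlM', hlA', hl₁⟩ : ∃ l > 0, l ≤ lM ∧ l ≤ lA ∧ l ≤ 1 :=
    ⟨min (min lM lA) 1, by positivity, (min_le_left _ _).trans (min_le_left _ _),
      (min_le_left _ _).trans (min_le_right _ _), min_le_right _ _⟩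
  refine ⟨l, hl, fun v v' ψ => ?_⟩
  have := mul_le_mul_of_nonneg_right hlM' (dotProduct_self_nonneg v')
  have := mul_le_mul_of_nonneg_right hl₁ (dotProduct_self_nonneg v)
  have := mul_le_mul_of_nonneg_right hlA' (dotProduct_self_nonneg ψ)
  have := hMl v'
  have := hAl ψ
  have := hK.dotProduct_mulVec_self_nonneg v
  simp only [piezoEnergy]
  linarith

theorem exists_piezoEnergy_le (M K : Matrix ι ι ℝ) {A : Matrix κ κ ℝ} (hA : A.PosDef)
    (C : Matrix ι κ ℝ) :
    ∃ c ≥ 1, ∀ v v' ψ G, Cᵀ *ᵥ v - A *ᵥ ψ = G →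
      piezoEnergy M K A v v' ψ ≤ c * (v' ⬝ᵥ v' + v ⬝ᵥ v + G ⬝ᵥ G) := by
  obtain ⟨cM, hcM, hMc⟩ := M.exists_dotProduct_mulVec_le
  obtain ⟨cK, hcK, hKc⟩ := K.exists_dotProduct_mulVec_le
  obtain ⟨cC, hcC, hCc⟩ := (C * Cᵀ).exists_dotProduct_mulVec_le
  obtain ⟨lA, hlA, hAl⟩ := hA.exists_mul_dotProduct_self_le
  have hD : 0 ≤ 2 * (cC + 1) / lA := by positivity
  refine ⟨cM + cK + 1 + 2 * (cC + 1) / lA, by linarith, fun v v' ψ G hG => ?_⟩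
  have hAψ : A *ᵥ ψ = Cᵀ *ᵥ v - G := by rw [← hG]; abel
  have hCv : Cᵀ *ᵥ v ⬝ᵥ Cᵀ *ᵥ v ≤ cC * (v ⬝ᵥ v) := by
    rw [transpose_mulVec_dotProduct, mulVec_mulVec]
    exact hCc v
  have hψ : ψ ⬝ᵥ A *ᵥ ψ ≤ 2 * (cC + 1) / lA * (v ⬝ᵥ v + G ⬝ᵥ G) := by
    rw [div_mul_eq_mul_div, le_div_iff₀ hlA, mul_comm]
    have hcoer := hAl ψ
    rw [hAψ] at hcoer ⊢
    refine (mul_dotProduct_le_of_mul_dotProduct_self_le hlA hcoer).trans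
      ((sub_dotProduct_self_le _ _).trans ?_)
    nlinarith [dotProduct_self_nonneg v, dotProduct_self_nonneg G]
  have := hMc v'
  have := hKc v
  have := dotProduct_self_nonneg v
  have := dotProduct_self_nonneg v'
  have := dotProduct_self_nonneg G
  simp only [piezoEnergy]
  nlinarith

theorem hasDerivAt_piezoEnergy {M K : Matrix ι ι ℝ} {A : Matrix κ κ ℝ} (hM : M.IsSymm)
    (hK : K.IsSymm) (hA : A.IsSymm) {v v' : ℝ → ι → ℝ} {ψ : ℝ → κ → ℝ} {v'' : ι → ℝ}
    {ψ' : κ → ℝ} {t : ℝ} (hv : HasDerivAt v (v' t) t) (hv' : HasDerivAt v' v'' t)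
    (hψ : HasDerivAt ψ ψ' t) :
    HasDerivAt (fun s => piezoEnergy M K A (v s) (v' s) (ψ s))
      (2 * (v'' ⬝ᵥ M *ᵥ v' t + v' t ⬝ᵥ K *ᵥ v t + ψ' ⬝ᵥ A *ᵥ ψ t + v' t ⬝ᵥ v t)) t := by
  refine ((((hv'.dotProduct_mulVec_self hM).add (hv.dotProduct_mulVec_self hK)).add
    (hψ.dotProduct_mulVec_self hA)).add (hv.dotProduct hv)).congr_deriv ?_
  rw [dotProduct_comm (v t)]
  ring

theorem piezo_energy_balance {M K : Matrix ι ι ℝ} {A : Matrix κ κ ℝ} {C : Matrix ι κ ℝ}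
    (hM : M.IsSymm) (hA : A.IsSymm) {α β : ℝ} {v v' v'' F : ι → ℝ} {ψ ψ' G' : κ → ℝ}
    (hmot : M *ᵥ v'' + α • M *ᵥ v' + K *ᵥ v + β • K *ᵥ v' + C *ᵥ ψ = F)
    (hcon : Cᵀ *ᵥ v' - A *ᵥ ψ' = G') :
    v'' ⬝ᵥ M *ᵥ v' + v' ⬝ᵥ K *ᵥ v + ψ' ⬝ᵥ A *ᵥ ψ
      = v' ⬝ᵥ F - α * (v' ⬝ᵥ M *ᵥ v') - β * (v' ⬝ᵥ K *ᵥ v') - ψ ⬝ᵥ G' := by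
  have hC : v' ⬝ᵥ C *ᵥ ψ = ψ' ⬝ᵥ A *ᵥ ψ + ψ ⬝ᵥ G' := by
    rw [← transpose_mulVec_dotProduct, ← hcon, dotProduct_sub, dotProduct_comm ψ (Cᵀ *ᵥ v'),
      hA.dotProduct_mulVec_comm ψ]
    ring
  rw [← hmot]
  simp only [dotProduct_add, dotProduct_smul, smul_eq_mul, hC, hM.dotProduct_mulVec_comm v'']
  ring

theorem piezoEnergy_deriv_le {M K : Matrix ι ι ℝ} {A : Matrix κ κ ℝ} {C : Matrix ι κ ℝ}
    (hM : M.PosSemidef) (hK : K.PosSemidef) (hA : A.IsSymm) {α β l : ℝ} (hα : 0 ≤ α)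
    (hβ : 0 ≤ β) (hl : 0 < l)
    (hcoer : ∀ v v' ψ, l * (v' ⬝ᵥ v' + v ⬝ᵥ v + ψ ⬝ᵥ ψ) ≤ piezoEnergy M K A v v' ψ)
    {v v' v'' F : ι → ℝ} {ψ ψ' G' : κ → ℝ}
    (hmot : M *ᵥ v'' + α • M *ᵥ v' + K *ᵥ v + β • K *ᵥ v' + C *ᵥ ψ = F)
    (hcon : Cᵀ *ᵥ v' - A *ᵥ ψ' = G') :
    2 * (v'' ⬝ᵥ M *ᵥ v' + v' ⬝ᵥ K *ᵥ v + ψ' ⬝ᵥ A *ᵥ ψ + v' ⬝ᵥ v)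
      ≤ 2 / l * piezoEnergy M K A v v' ψ + (F ⬝ᵥ F + G' ⬝ᵥ G') := by
  rw [piezo_energy_balance hM.isSymm hA hmot hcon]
  have hE : 2 * (v' ⬝ᵥ v' + v ⬝ᵥ v + ψ ⬝ᵥ ψ) ≤ 2 / l * piezoEnergy M K A v v' ψ := by
    rw [div_mul_eq_mul_div, le_div_iff₀ hl]
    linarith [hcoer v v' ψ]
  have hG := two_mul_dotProduct_le ψ (-G')
  simp only [dotProduct_neg, neg_dotProduct, neg_neg] at hG
  have := mul_nonneg hα (hM.dotProduct_mulVec_self_nonneg v')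
  have := mul_nonneg hβ (hK.dotProduct_mulVec_self_nonneg v')
  have := two_mul_dotProduct_le v' F
  have := two_mul_dotProduct_le v' v
  linarith [dotProduct_self_nonneg v, dotProduct_self_nonneg ψ]

end Energy

section Solutions

variable {n k : ℕ} {M K : Matrix (Fin n) (Fin n) ℝ} {A : Matrix (Fin k) (Fin k) ℝ}
  {C : Matrix (Fin n) (Fin k) ℝ} {α β a b : ℝ}

theorem PiezoSolves.constraint_deriv {f : ℝ → Fin n → ℝ} {g g' : ℝ → Fin k → ℝ}
    {u u' u'' : ℝ → Fin n → ℝ} {φ φ' : ℝ → Fin k → ℝ}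
    (hsol : PiezoSolves M K A C α β f g u u' u'' φ (Icc a b)) (hab : a < b)
    (hφ : ∀ t ∈ Icc a b, HasDerivAt φ (φ' t) t) (hg : ∀ t ∈ Icc a b, HasDerivAt g (g' t) t) :
    ∀ t ∈ Icc a b, Cᵀ *ᵥ u' t - A *ᵥ φ' t = g' t := fun t ht =>
  (((hsol.1 t ht).matrix_mulVec Cᵀ).sub ((hφ t ht).matrix_mulVec A)).eq_of_eqOn_Icc hab ht
    hsol.2.2.2 (hg t ht)

theorem PiezoSolves.deriv {f f' : ℝ → Fin n → ℝ} {g g' : ℝ → Fin k → ℝ}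
    {u u' u'' u''' : ℝ → Fin n → ℝ} {φ φ' : ℝ → Fin k → ℝ}
    (hsol : PiezoSolves M K A C α β f g u u' u'' φ (Icc a b)) (hab : a < b)
    (hf : ∀ t ∈ Icc a b, HasDerivAt f (f' t) t) (hg : ∀ t ∈ Icc a b, HasDerivAt g (g' t) t)
    (hu'' : ∀ t ∈ Icc a b, HasDerivAt u'' (u''' t) t)
    (hφ : ∀ t ∈ Icc a b, HasDerivAt φ (φ' t) t) :
    PiezoSolves M K A C α β f' g' u' u'' u''' φ' (Icc a b) := by
  refine ⟨hsol.2.1, hu'', fun t ht => ?_, hsol.constraint_deriv hab hφ hg⟩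
  obtain ⟨hu, hu', hmot, -⟩ := hsol
  exact (((((hu'' t ht).matrix_mulVec M).add (((hu' t ht).matrix_mulVec M).const_smul α)).add
    ((hu t ht).matrix_mulVec K)).add (((hu' t ht).matrix_mulVec K).const_smul β)).add
    ((hφ t ht).matrix_mulVec C) |>.eq_of_eqOn_Icc hab ht hmot (hf t ht)

theorem PiezoSolves.piezoEnergy_le {l : ℝ} {F : ℝ → Fin n → ℝ} {G G' : ℝ → Fin k → ℝ}
    {v v' v'' : ℝ → Fin n → ℝ} {ψ ψ' : ℝ → Fin k → ℝ} {H : ℝ → ℝ}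
    (hsol : PiezoSolves M K A C α β F G v v' v'' ψ (Icc a b)) (hab : a < b)
    (hM : M.PosSemidef) (hK : K.PosSemidef) (hA : A.IsSymm) (hα : 0 ≤ α) (hβ : 0 ≤ β)
    (hl : 0 < l)
    (hcoer : ∀ v v' ψ, l * (v' ⬝ᵥ v' + v ⬝ᵥ v + ψ ⬝ᵥ ψ) ≤ piezoEnergy M K A v v' ψ)
    (hψ : ∀ t ∈ Icc a b, HasDerivAt ψ (ψ' t) t) (hG : ∀ t ∈ Icc a b, HasDerivAt G (G' t) t)
    (hH : Continuous H) (hFG : ∀ t, F t ⬝ᵥ F t + G' t ⬝ᵥ G' t ≤ H t) :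
    ∀ t ∈ Icc a b, piezoEnergy M K A (v t) (v' t) (ψ t)
      ≤ Real.exp (2 / l * (b - a)) *
        (piezoEnergy M K A (v a) (v' a) (ψ a) + ∫ s in a..b, H s) := by
  have hcon := hsol.constraint_deriv hab hψ hG
  obtain ⟨hv, hv', hmot, -⟩ := hsol
  have hE (t : ℝ) (ht : t ∈ Icc a b) :=
    hasDerivAt_piezoEnergy hM.isSymm hK.isSymm hA (hv t ht) (hv' t ht) (hψ t ht)
  have hH₀ (t : ℝ) : 0 ≤ H t :=
    (add_nonneg (dotProduct_self_nonneg _) (dotProduct_self_nonneg _)).trans (hFG t)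
  have hgron := le_exp_mul_add_integral_of_deriv_right_le (κ := 2 / l) (by positivity)
    (fun t ht => (hE t ht).continuousAt.continuousWithinAt)
    (fun t ht => (hE t (Ico_subset_Icc_self ht)).hasDerivWithinAt) hH hH₀
    fun t ht => (piezoEnergy_deriv_le hM hK hA hα hβ hl hcoer (hmot t (Ico_subset_Icc_self ht))
      (hcon t (Ico_subset_Icc_self ht))).trans (by linarith [hFG t])
  intro t ht
  have hEa : 0 ≤ piezoEnergy M K A (v a) (v' a) (ψ a) := (hcoer _ _ _).trans' <|
    mul_nonneg hl.le <| add_nonneg (add_nonneg (dotProduct_self_nonneg _)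
      (dotProduct_self_nonneg _)) (dotProduct_self_nonneg _)
  have hint : ∫ s in a..t, H s ≤ ∫ s in a..b, H s :=
    intervalIntegral.integral_mono_interval le_rfl ht.1 ht.2 (.of_forall hH₀)
      (hH.intervalIntegrable _ _)
  refine (hgron t ht).trans ?_
  gcongr
  · exact add_nonneg hEa (intervalIntegral.integral_nonneg ht.1 fun s _ => hH₀ s)
  · exact ht.2

end Solutions

/-- Higher-regularity energy estimate (the Galerkin core of Theorem 2): a constant `C*`
depending only on the data `M, K, A, C, α, β, T` bounds
`‖u''(t)‖² + ‖u'(t)‖² + ‖φ'(t)‖²` by the differentiated initial data and forcing. -/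
theorem piezo_discrete_higher_regularity_estimate {n k : ℕ}
    (M K : Matrix (Fin n) (Fin n) ℝ) (A : Matrix (Fin k) (Fin k) ℝ)
    (C : Matrix (Fin n) (Fin k) ℝ) (α β : ℝ)
    (hM : M.PosDef) (hK : K.PosSemidef) (hA : A.PosDef)
    (hα : 0 ≤ α) (hβ : 0 ≤ β)
    (T : ℝ) (hT : 0 < T) :
    ∃ Cstar > (0 : ℝ),
      ∀ (f f' : ℝ → Fin n → ℝ) (g g' g'' : ℝ → Fin k → ℝ)
        (u u' u'' u''' : ℝ → Fin n → ℝ) (φ φ' φ'' : ℝ → Fin k → ℝ),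
        (∀ t, HasDerivAt f (f' t) t) → Continuous f' →
        (∀ t, HasDerivAt g (g' t) t) → (∀ t, HasDerivAt g' (g'' t) t) →
        Continuous g'' →
        PiezoSolves M K A C α β f g u u' u'' φ (Icc 0 T) →
        (∀ t ∈ Icc (0 : ℝ) T, HasDerivAt u'' (u''' t) t) →
        ContinuousOn u''' (Icc 0 T) →
        (∀ t ∈ Icc (0 : ℝ) T, HasDerivAt φ (φ' t) t) →
        (∀ t ∈ Icc (0 : ℝ) T, HasDerivAt φ' (φ'' t) t) →
        ContinuousOn φ'' (Icc 0 T) →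
        ∀ t ∈ Icc (0 : ℝ) T,
          u'' t ⬝ᵥ u'' t + u' t ⬝ᵥ u' t + φ' t ⬝ᵥ φ' t ≤
            Cstar * (u'' 0 ⬝ᵥ u'' 0 + u' 0 ⬝ᵥ u' 0 + g' 0 ⬝ᵥ g' 0
              + ∫ s in (0 : ℝ)..T, (f' s ⬝ᵥ f' s + g' s ⬝ᵥ g' s + g'' s ⬝ᵥ g'' s)) := by
  obtain ⟨l, hl, hcoer⟩ := exists_mul_le_piezoEnergy hM hK hA
  obtain ⟨c, hc, hinit⟩ := exists_piezoEnergy_le M K hA C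
  refine ⟨l⁻¹ * Real.exp (2 / l * T) * c, by positivity, ?_⟩
  intro f f' g g' g'' u u' u'' u''' φ φ' φ'' hf hf' hg hg' hg'' hsol hu''' _ hφ hφ' _ t ht
  have hsol' := hsol.deriv hT (fun s _ => hf s) (fun s _ => hg s) hu''' hφ
  have hg'c : Continuous g' := continuous_iff_continuousAt.2 fun s => (hg' s).continuousAt
  have hE := hsol'.piezoEnergy_le hT hM.posSemidef hK hA.posSemidef.isSymm hα hβ hl hcoer hφ'
    (fun s _ => hg' s) (H := fun s => f' s ⬝ᵥ f' s + g' s ⬝ᵥ g' s + g'' s ⬝ᵥ g'' s)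
    (by fun_prop) (fun s => by linarith [dotProduct_self_nonneg (g' s)]) t ht
  have hE₀ := hinit (u' 0) (u'' 0) (φ' 0) (g' 0) (hsol'.2.2.2 0 (left_mem_Icc.2 hT.le))
  set S₀ := u'' 0 ⬝ᵥ u'' 0 + u' 0 ⬝ᵥ u' 0 + g' 0 ⬝ᵥ g' 0
  set I := ∫ s in (0 : ℝ)..T, (f' s ⬝ᵥ f' s + g' s ⬝ᵥ g' s + g'' s ⬝ᵥ g'' s)
  have hI : 0 ≤ I := intervalIntegral.integral_nonneg hT.le fun s _ =>
    add_nonneg (add_nonneg (dotProduct_self_nonneg _) (dotProduct_self_nonneg _))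
      (dotProduct_self_nonneg _)
  rw [sub_zero] at hE
  calc _ ≤ l⁻¹ * piezoEnergy M K A (u' t) (u'' t) (φ' t) := by
        rw [le_inv_mul_iff₀ hl]
        exact hcoer _ _ _
    _ ≤ l⁻¹ * Real.exp (2 / l * T) * (c * S₀ + I) := by
        rw [mul_assoc]
        gcongr
        exact hE.trans (by gcongr)
    _ ≤ l⁻¹ * Real.exp (2 / l * T) * c * (S₀ + I) := by
        rw [mul_assoc _ c]
        gcongr
        nlinarith
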